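/- Let Q be a positive integer. The map sending an ordered pair of consecutive fractions of F^Q to the ordered pair (q', q'') of their denominators is a bijection onto the set of pairs of integers (m, n) with 1 ≤ m, n ≤ Q, gcd(m,n) = 1 and m + n > Q. In particular, every such coprime pair (m,n) with m+n > Q occurs exactly once as a pair of consecutive denominators in F^Q. -/
import Mathlib


/-- The Farey sequence `F^Q` of order `Q`: rationals `a/q` in lowest terms with
`0 ≤ a/q ≤ 1` and denominator `q ≤ Q`. -/
def FareyFrac (Q : ℕ) : Set ℚ := {x | 0 ≤ x ∧ x ≤ 1 ∧ x.den ≤ Q}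

/-- `x` and `y` are consecutive (neighbor) fractions of `F^Q`. -/
def FareyCons (Q : ℕ) (x y : ℚ) : Prop :=
  x ∈ FareyFrac Q ∧ y ∈ FareyFrac Q ∧ x < y ∧
    ∀ z ∈ FareyFrac Q, ¬ (x < z ∧ z < y)

private lemma rat_den_cast_pos (x : ℚ) : (0:ℚ) < (x.den:ℚ) := by exact_mod_cast x.den_pos

private lemma sub_mul_den (x y : ℚ) :
    (y - x) * ((x.den:ℚ) * (y.den:ℚ))
      = ((y.num * (x.den:ℤ) - x.num * (y.den:ℤ) : ℤ) : ℚ) := by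
  push_cast
  calc (y - x) * ((x.den:ℚ) * (y.den:ℚ))
      = (y * (y.den:ℚ)) * (x.den:ℚ) - (x * (x.den:ℚ)) * (y.den:ℚ) := by ring
    _ = (y.num:ℚ) * (x.den:ℚ) - (x.num:ℚ) * (y.den:ℚ) := by
        rw [Rat.mul_den_eq_num, Rat.mul_den_eq_num]

private lemma rat_lt_iff' (x y : ℚ) : x < y ↔ x.num * (y.den:ℤ) < y.num * (x.den:ℤ) := by
  have hpos : (0:ℚ) < (x.den:ℚ) * (y.den:ℚ) :=
    mul_pos (rat_den_cast_pos x) (rat_den_cast_pos y)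
  have key := sub_mul_den x y
  constructor
  · intro h
    have h1 : (0:ℚ) < (y - x) * ((x.den:ℚ) * (y.den:ℚ)) :=
      mul_pos (by linarith) hpos
    rw [key] at h1
    have h2 : (0:ℤ) < y.num * (x.den:ℤ) - x.num * (y.den:ℤ) := by exact_mod_cast h1
    linarith
  · intro h
    by_contra h'
    push_neg at h'
    have h1 : (0:ℚ) ≤ (x - y) * ((x.den:ℚ) * (y.den:ℚ)) :=
      mul_nonneg (by linarith) hpos.le
    have h2 : (0:ℚ) < ((y.num * (x.den:ℤ) - x.num * (y.den:ℤ) : ℤ) : ℚ) := by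
      exact_mod_cast sub_pos.mpr h
    rw [← key] at h2
    nlinarith

private lemma gap (x z : ℚ) (h : x < z) :
    (1:ℚ) ≤ (z - x) * ((x.den:ℚ) * (z.den:ℚ)) := by
  rw [sub_mul_den]
  have h1 : x.num * (z.den:ℤ) < z.num * (x.den:ℤ) := (rat_lt_iff' x z).mp h
  have h2 : (1:ℤ) ≤ z.num * (x.den:ℤ) - x.num * (z.den:ℤ) := by linarith
  exact_mod_cast h2

private lemma no_middle (Q : ℕ) (x y z : ℚ)
    (huni : y.num * (x.den:ℤ) - x.num * (y.den:ℤ) = 1)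
    (hsum : Q < x.den + y.den) (hzQ : z.den ≤ Q) (h1 : x < z) (h2 : z < y) : False := by
  set b : ℚ := (x.den:ℚ) with hb
  set d : ℚ := (y.den:ℚ) with hd
  set q : ℚ := (z.den:ℚ) with hq
  have hbpos : (0:ℚ) < b := rat_den_cast_pos x
  have hdpos : (0:ℚ) < d := rat_den_cast_pos y
  have hqpos : (0:ℚ) < q := rat_den_cast_pos z
  have g1 : (1:ℚ) ≤ (z - x) * (b * q) := gap x z h1
  have g2 : (1:ℚ) ≤ (y - z) * (q * d) := gap z y h2
  have key : (y - x) * (b * d) = 1 := by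
    rw [hb, hd, sub_mul_den, huni]; norm_num
  have key2 : (y - x) * (b * d) * q = q := by rw [key]; ring
  have g1d : (1:ℚ) * d ≤ (z - x) * (b * q) * d :=
    mul_le_mul_of_nonneg_right g1 hdpos.le
  have g2b : (1:ℚ) * b ≤ (y - z) * (q * d) * b :=
    mul_le_mul_of_nonneg_right g2 hbpos.le
  have h3 : b + d ≤ q := by nlinarith [g1d, g2b, key2]
  have h4 : q ≤ (Q:ℚ) := by rw [hq]; exact_mod_cast hzQ
  have h5 : (Q:ℚ) < b + d := by rw [hb, hd]; exact_mod_cast hsum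
  linarith

private lemma cons_of_unimodular (Q : ℕ) (x y : ℚ) (hx0 : 0 ≤ x) (hy1 : y ≤ 1)
    (hxQ : x.den ≤ Q) (hyQ : y.den ≤ Q)
    (huni : y.num * (x.den:ℤ) - x.num * (y.den:ℤ) = 1) (hsum : Q < x.den + y.den) :
    FareyCons Q x y := by
  have hxy : x < y := (rat_lt_iff' x y).mpr (by linarith)
  refine ⟨⟨hx0, le_trans hxy.le hy1, hxQ⟩, ⟨le_trans hx0 hxy.le, hy1, hyQ⟩, hxy, ?_⟩
  rintro z ⟨_, _, hzQ⟩ ⟨h1, h2⟩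
  exact no_middle Q x y z huni hsum hzQ h1 h2

private lemma succ_exists (Q : ℕ) (x : ℚ) (hx : x ∈ FareyFrac Q) (hx1 : x < 1) :
    ∃ y : ℚ, y.den ≤ Q ∧ Q < x.den + y.den ∧
      y.num * (x.den:ℤ) - x.num * (y.den:ℤ) = 1 ∧ x < y ∧
      ∀ z ∈ FareyFrac Q, x < z → y ≤ z := by
  obtain ⟨hx0, _, hxQ⟩ := hx
  set a : ℤ := x.num with ha
  set b : ℤ := (x.den : ℤ) with hb
  have hbpos : 0 < b := by rw [hb]; exact_mod_cast x.den_pos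
  have hbQ : b ≤ (Q:ℤ) := by rw [hb]; exact_mod_cast hxQ
  have ha0 : 0 ≤ a := Rat.num_nonneg.mpr hx0
  have hcop : IsCoprime a b := by
    rw [Int.isCoprime_iff_gcd_eq_one]
    exact x.reduced
  obtain ⟨u, v, huv⟩ := hcop
  set k : ℤ := ((Q:ℤ) + u) / b with hk
  set d : ℤ := (-u) + b * k with hdd
  set c : ℤ := v + a * k with hcc
  have hunim : b * c - a * d = 1 := by
    rw [hdd, hcc]; linear_combination huv
  have hr0 : 0 ≤ ((Q:ℤ) + u) % b := Int.emod_nonneg _ (ne_of_gt hbpos)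
  have hrb : ((Q:ℤ) + u) % b < b := Int.emod_lt_of_pos _ hbpos
  have hdiv := Int.emod_add_mul_ediv ((Q:ℤ) + u) b
  have hdQ : d ≤ (Q:ℤ) := by rw [hdd]; linarith
  have hdgt : (Q:ℤ) - b < d := by rw [hdd]; linarith
  have hdpos : 0 < d := by linarith
  have hc1 : 1 ≤ c := by
    by_contra hc
    push_neg at hc
    have hbc : b * c ≤ 0 := mul_nonpos_of_nonneg_of_nonpos hbpos.le (by linarith)
    have had : 0 ≤ a * d := mul_nonneg ha0 hdpos.le
    linarith
  have hcd : IsCoprime c d := ⟨b, -a, by linear_combination hunim⟩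
  have hcd' : c.natAbs.Coprime d.natAbs := Int.isCoprime_iff_gcd_eq_one.mp hcd
  set y : ℚ := (c:ℚ) / (d:ℚ) with hy
  have hynum : y.num = c := Rat.num_div_eq_of_coprime hdpos hcd'
  have hyden : ((y.den:ℤ)) = d := Rat.den_div_eq_of_coprime hdpos hcd'
  have hydQ : y.den ≤ Q := by
    have : ((y.den:ℤ)) ≤ (Q:ℤ) := by rw [hyden]; exact hdQ
    exact_mod_cast this
  refine ⟨y, hydQ, ?_, ?_, ?_, ?_⟩
  · have : (Q:ℤ) < b + d := by linarith
    rw [hyden.symm, hb] at this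
    exact_mod_cast this
  · rw [hynum, hyden]; linear_combination hunim
  · rw [rat_lt_iff' x y, hynum, hyden]
    have hxa : x.num = a := ha.symm
    have hxb : ((x.den:ℤ)) = b := hb.symm
    rw [hxa, hxb]; linarith [hunim]
  · rintro z ⟨hz0, hz1, hzQ⟩ hxz
    by_contra hlt
    push_neg at hlt
    have hsum' : Q < x.den + y.den := by
      have : (Q:ℤ) < (x.den:ℤ) + (y.den:ℤ) := by rw [hyden, ← hb]; linarith
      exact_mod_cast this
    exact no_middle Q x y z (by rw [hynum, hyden]; linear_combination hunim)
      hsum' hzQ hxz hlt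

private lemma cons_unimodular (Q : ℕ) (x y : ℚ) (h : FareyCons Q x y) :
    y.num * (x.den:ℤ) - x.num * (y.den:ℤ) = 1 ∧ Q < x.den + y.den := by
  obtain ⟨hx, hy, hxy, hmid⟩ := h
  have hx1 : x < 1 := lt_of_lt_of_le hxy hy.2.1
  obtain ⟨y', h1, h2, h3, h4, h5⟩ := succ_exists Q x hx hx1
  have hle : y' ≤ y := h5 y hy hxy
  have heq : y' = y := by
    rcases eq_or_lt_of_le hle with h | h
    · exact h
    · exact absurd ⟨h4, h⟩ (hmid y' ⟨le_trans hx.1 h4.le, le_trans h.le hy.2.1, h1⟩)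
  subst heq
  exact ⟨h3, h2⟩

private lemma exists_pair (m n : ℕ) (hm : 1 ≤ m) (hco : Nat.Coprime m n) :
    ∃ a c : ℤ, 0 ≤ a ∧ a < (m:ℤ) ∧ c * (m:ℤ) - a * (n:ℤ) = 1 := by
  have hm' : (0:ℤ) < (m:ℤ) := by exact_mod_cast hm
  obtain ⟨u, v, huv⟩ := Nat.isCoprime_iff_coprime.mpr hco
  refine ⟨(-v) % m, u - (n:ℤ) * ((-v) / m), Int.emod_nonneg _ (ne_of_gt hm'),
    Int.emod_lt_of_pos _ hm', ?_⟩
  have hdiv := Int.emod_add_mul_ediv (-v) (m:ℤ)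
  linear_combination huv - (n:ℤ) * hdiv

/-- The map sending an ordered pair of consecutive fractions of `F^Q` to the pair of
their denominators is a bijection onto the set of pairs `(m, n)` with
`1 ≤ m, n ≤ Q`, `gcd(m, n) = 1` and `m + n > Q`. -/
theorem farey_consecutive_den_bijOn (Q : ℕ) (hQ : 0 < Q) :
    Set.BijOn (fun p : ℚ × ℚ => (p.1.den, p.2.den))
      {p : ℚ × ℚ | FareyCons Q p.1 p.2}
      {mn : ℕ × ℕ | 1 ≤ mn.1 ∧ mn.1 ≤ Q ∧ 1 ≤ mn.2 ∧ mn.2 ≤ Q ∧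
        Nat.Coprime mn.1 mn.2 ∧ Q < mn.1 + mn.2} := by
  refine ⟨?_, ?_, ?_⟩
  · -- MapsTo
    rintro ⟨x, y⟩ hp
    simp only [Set.mem_setOf_eq] at hp ⊢
    obtain ⟨huni, hsum⟩ := cons_unimodular Q x y hp
    have hcop : IsCoprime ((x.den:ℤ)) ((y.den:ℤ)) :=
      ⟨y.num, -x.num, by linear_combination huni⟩
    refine ⟨x.den_pos, hp.1.2.2, y.den_pos, hp.2.1.2.2, ?_, hsum⟩
    exact Nat.isCoprime_iff_coprime.mp hcop
  · -- InjOn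
    rintro ⟨x, y⟩ hp ⟨x', y'⟩ hq heq
    simp only [Set.mem_setOf_eq] at hp hq
    have hb : x.den = x'.den := congrArg Prod.fst heq
    have hd : y.den = y'.den := congrArg Prod.snd heq
    obtain ⟨hu1, _⟩ := cons_unimodular Q x y hp
    obtain ⟨hu2, _⟩ := cons_unimodular Q x' y' hq
    rw [← hb, ← hd] at hu2
    have hbpos : (0:ℤ) < (x.den:ℤ) := by exact_mod_cast x.den_pos
    -- numerator bounds
    have hx1 : x < 1 := lt_of_lt_of_le hp.2.2.1 hp.2.1.2.1
    have hx1' : x' < 1 := lt_of_lt_of_le hq.2.2.1 hq.2.1.2.1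
    have hxa : x.num < (x.den:ℤ) := by
      have := (rat_lt_iff' x 1).mp hx1
      simpa using this
    have hxa' : x'.num < (x.den:ℤ) := by
      have := (rat_lt_iff' x' 1).mp hx1'
      rw [hb]
      simpa using this
    have hx0 : 0 ≤ x.num := Rat.num_nonneg.mpr hp.1.1
    have hx0' : 0 ≤ x'.num := Rat.num_nonneg.mpr hq.1.1
    have hcop : IsCoprime ((x.den:ℤ)) ((y.den:ℤ)) :=
      ⟨y.num, -x.num, by linear_combination hu1⟩
    have hdvd : (x.den:ℤ) ∣ (x.num - x'.num) * (y.den:ℤ) :=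
      ⟨y.num - y'.num, by linear_combination hu2 - hu1⟩
    obtain ⟨k, hk⟩ := hcop.dvd_of_dvd_mul_right hdvd
    have hk1 : k < 1 := by nlinarith
    have hk2 : -1 < k := by nlinarith
    have hk0 : k = 0 := by omega
    rw [hk0, mul_zero] at hk
    have hanum : x.num = x'.num := by linarith
    have hxx : x = x' := Rat.ext hanum hb
    have hcnum : y.num = y'.num := by
      have h1 : y.num * (x.den:ℤ) = y'.num * (x.den:ℤ) := by
        rw [hanum] at hu1; linarith
      exact mul_right_cancel₀ (ne_of_gt hbpos) h1
    have hyy : y = y' := Rat.ext hcnum hd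
    rw [Prod.ext_iff]
    exact ⟨hxx, hyy⟩
  · -- SurjOn
    rintro ⟨m, n⟩ ⟨hm1, hmQ, hn1, hnQ, hco, hQmn⟩
    obtain ⟨a, c, ha0, ham, hac⟩ := exists_pair m n hm1 hco
    have hm' : (0:ℤ) < (m:ℤ) := by exact_mod_cast hm1
    have hn' : (0:ℤ) < (n:ℤ) := by exact_mod_cast hn1
    have han : 0 ≤ a * n := mul_nonneg ha0 hn'.le
    have hc1 : 1 ≤ c := by nlinarith
    have hcn : c ≤ (n:ℤ) := by nlinarith
    have hcop_am : IsCoprime a ((m:ℤ)) := ⟨-(n:ℤ), c, by linear_combination hac⟩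
    have hcop_cn : IsCoprime c ((n:ℤ)) := ⟨(m:ℤ), -a, by linear_combination hac⟩
    have hcop_am' : a.natAbs.Coprime ((m:ℤ)).natAbs :=
      Int.isCoprime_iff_gcd_eq_one.mp hcop_am
    have hcop_cn' : c.natAbs.Coprime ((n:ℤ)).natAbs :=
      Int.isCoprime_iff_gcd_eq_one.mp hcop_cn
    set x : ℚ := (a:ℚ) / (m:ℚ) with hxdef
    set y : ℚ := (c:ℚ) / (n:ℚ) with hydef
    have hxnum : x.num = a := Rat.num_div_eq_of_coprime hm' hcop_am'
    have hxden : ((x.den:ℤ)) = (m:ℤ) := Rat.den_div_eq_of_coprime hm' hcop_am'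
    have hynum : y.num = c := Rat.num_div_eq_of_coprime hn' hcop_cn'
    have hyden : ((y.den:ℤ)) = (n:ℤ) := Rat.den_div_eq_of_coprime hn' hcop_cn'
    have hxden' : x.den = m := by exact_mod_cast hxden
    have hyden' : y.den = n := by exact_mod_cast hyden
    refine ⟨(x, y), ?_, ?_⟩
    · simp only [Set.mem_setOf_eq]
      apply cons_of_unimodular Q x y
      · apply div_nonneg (by exact_mod_cast ha0) (by exact_mod_cast hm'.le)
      · rw [hydef, div_le_one (by exact_mod_cast hn')]
        exact_mod_cast hcn
      · rw [hxden']; exact hmQ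
      · rw [hyden']; exact hnQ
      · rw [hxnum, hynum, hxden, hyden]; linear_combination hac
      · rw [hxden', hyden']; exact hQmn
    · simp only [hxden', hyden']
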